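/- arXiv:2212.08766 — 3 statements merged into one kernel-verified Lean document; each statement's English description precedes it below -/
import Mathlib

section
/- Let q ∈ (0,1), γ ∈ (0,1), let k ≥ 1 be a natural number, and let x, y ∈ [0,1]. Assume that k − k·x + 1 ≤ q·k·x and that (q+γ)·k·y ≤ k − k·y + 1. Then x − y ≥ γ/((1+q)(1+q+γ)), and moreover γ/((1+q)(1+q+γ)) ≥ γ/(3(1+q)). -/
/-- Lemma A.2 of the paper: a purely algebraic inequality. If
`k − k·x + 1 ≤ q·k·x` and `(q+γ)·k·y ≤ k − k·y + 1`, then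
`x − y ≥ γ/((1+q)(1+q+γ))`, and moreover
`γ/((1+q)(1+q+γ)) ≥ γ/(3(1+q))`. -/
theorem mlr_alg_inequality
    (q γ : ℝ) (hq0 : 0 < q) (hq1 : q < 1) (hγ0 : 0 < γ) (hγ1 : γ < 1)
    (k : ℕ) (hk : 1 ≤ k)
    (x y : ℝ) (hx : x ∈ Set.Icc (0 : ℝ) 1) (hy : y ∈ Set.Icc (0 : ℝ) 1)
    (h1 : (k : ℝ) - (k : ℝ) * x + 1 ≤ q * ((k : ℝ) * x))
    (h2 : (q + γ) * ((k : ℝ) * y) ≤ (k : ℝ) - (k : ℝ) * y + 1) :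
    γ / ((1 + q) * (1 + q + γ)) ≤ x - y ∧
      γ / (3 * (1 + q)) ≤ γ / ((1 + q) * (1 + q + γ)) := by
  have hK : (1:ℝ) ≤ (k:ℝ) := by exact_mod_cast hk
  have hp1 : (0:ℝ) < 1 + q := by linarith
  have hp2 : (0:ℝ) < 1 + q + γ := by linarith
  constructor
  · rw [div_le_iff₀ (by positivity)]
    nlinarith [mul_pos hp1 hp2, sq_nonneg ((k:ℝ)*(x-y)), mul_nonneg (le_of_lt hγ0) (sub_nonneg.mpr hK), hy.1, hx.2]
  · rw [div_le_div_iff₀ (by positivity) (by positivity)]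
    nlinarith [mul_pos hγ0 hp1]
end

section
/- For every q ∈ (0,1) there exists a constant C(q) > 0, depending only on q, such that the following holds: for all integers p ≥ M ≥ 1, let U_1, …, U_p be {0,1}-valued random variables with U_j = 1 deterministically for j ≤ M and with (U_j)_{M < j ≤ p} i.i.d. Bernoulli(1/2). For k ∈ {1,…,p} set P_k = ∑_{i=1}^k U_i, and define ψ = max{k ∈ {1,…,p} : k − P_k + 1 ≤ q·P_k}, with ψ = 0 if no such k exists. Then E[ψ] ≤ C(q)·M. -/
/-! Since the first `M` signs are positive, stopping at an index `k ≥ c M`, where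
`c ≥ 2(1+q)/(1-q)`, forces the centred sum of the coin flips `U_{M+1}, …, U_k` to exceed `ε k`
with `ε = (1-q)/(4(1+q))`. By Hoeffding's inequality this has probability at most
`ρ^k`, `ρ = exp(-2ε²)`. Bounding `ψ ≤ c M + ∑_{k > c M} k 𝟙{stop at k}` then gives
`E ψ ≤ c M + ∑ₖ k ρ^k ≤ C(q) M`. -/

open MeasureTheory

open scoped Classical

/-- The SeqStep stopping index: for a (realized) sign vector `u : ℕ → ℝ`
(1-indexed, `{0,1}`-valued), with `P_k = ∑_{i=1}^k u_i`,
`ψ = max{k ∈ {1,…,p} : k − P_k + 1 ≤ q·P_k}`, with `ψ = 0` if no such `k`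
exists. -/
noncomputable def seqStepPsi (p : ℕ) (q : ℝ) (u : ℕ → ℝ) : ℕ :=
  ((Finset.Icc 1 p).filter (fun (k : ℕ) =>
    (k : ℝ) - (∑ i ∈ Finset.Icc 1 k, u i) + 1 ≤ q * ∑ i ∈ Finset.Icc 1 k, u i)).sup id

open ProbabilityTheory Finset Real

def SeqStepStops (q : ℝ) (u : ℕ → ℝ) (k : ℕ) : Prop :=
  (k : ℝ) - ∑ i ∈ Icc 1 k, u i + 1 ≤ q * ∑ i ∈ Icc 1 k, u i

noncomputable def seqStepRate (q : ℝ) : ℝ :=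
  exp (-2 * ((1 - q) / (4 * (1 + q))) ^ 2)

lemma seqStepRate_pos (q : ℝ) : 0 < seqStepRate q := exp_pos _

lemma nat_mul_seqStepRate_pow_nonneg (q : ℝ) (k : ℕ) : 0 ≤ (k : ℝ) * seqStepRate q ^ k :=
  mul_nonneg k.cast_nonneg (pow_nonneg (seqStepRate_pos q).le k)

lemma seqStepRate_lt_one {q : ℝ} (hq : -1 < q) (hq1 : q < 1) : seqStepRate q < 1 := by
  have : 0 < (1 - q) / (4 * (1 + q)) := div_pos (by linarith) (by linarith)
  exact exp_lt_one_iff.2 (by nlinarith)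

lemma seqStepPsi_le_add_sum_ite (p N : ℕ) (q : ℝ) (u : ℕ → ℝ) :
    seqStepPsi p q u ≤ N + ∑ k ∈ Ioc N p, if SeqStepStops q u k then k else 0 := by
  refine Finset.sup_le fun k hk => ?_
  rw [mem_filter, mem_Icc] at hk
  rcases le_or_gt k N with hkN | hNk
  · exact le_add_right hkN
  · refine le_add_left (le_of_eq_of_le ?_ (single_le_sum (fun _ _ => Nat.zero_le _)
      (mem_Ioc.2 ⟨hNk, hk.1.2⟩)))
    exact (if_pos hk.2).symm

lemma sum_Icc_one_eq_of_eq_one {u : ℕ → ℝ} {M k : ℕ} (hMk : M ≤ k)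
    (hu : ∀ i, 1 ≤ i → i ≤ M → u i = 1) :
    ∑ i ∈ Icc 1 k, u i = M + (k - M) / 2 + ∑ i ∈ Ioc M k, (u i - 1 / 2) := by
  have h_Icc : ∀ n, Icc 1 n = Ioc 0 n := Icc_add_one_left_eq_Ioc 0
  have h_ones : ∑ i ∈ Ioc 0 M, u i = M := by
    rw [← h_Icc, sum_congr rfl fun i hi => hu i (mem_Icc.1 hi).1 (mem_Icc.1 hi).2]
    simp
  have h_centered : ∑ i ∈ Ioc M k, (u i - 1 / 2) = ∑ i ∈ Ioc M k, u i - (k - M) / 2 := by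
    rw [sum_sub_distrib, sum_const, Nat.card_Ioc, nsmul_eq_mul, Nat.cast_sub hMk]
    ring
  rw [h_Icc, ← sum_Ioc_consecutive _ (Nat.zero_le M) hMk, h_ones, h_centered]
  ring

lemma le_sum_Ioc_sub_half_of_seqStepStops {q : ℝ} (hq : -1 < q) {u : ℕ → ℝ} {M k : ℕ}
    (hu : ∀ i, 1 ≤ i → i ≤ M → u i = 1) (hMk : M ≤ k)
    (hk : 2 * (1 + q) * M ≤ (1 - q) * k)
    (hstop : SeqStepStops q u k) :
    (1 - q) / (4 * (1 + q)) * k ≤ ∑ i ∈ Ioc M k, (u i - 1 / 2) := by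
  rw [SeqStepStops, sum_Icc_one_eq_of_eq_one hMk hu] at hstop
  rw [div_mul_eq_mul_div, div_le_iff₀ (by linarith)]
  linarith

section Probability

variable {Ω : Type*} [MeasurableSpace Ω] {μ : Measure Ω}

lemma integral_eq_measureReal_of_zero_or_one {X : Ω → ℝ} (hX : Measurable X)
    (h01 : ∀ ω, X ω = 0 ∨ X ω = 1) :
    μ[X] = μ.real {ω | X ω = 1} := by
  have h_ind : X = {ω | X ω = 1}.indicator 1 := by
    ext ω
    rcases h01 ω with h | h <;> simp [h]
  conv_lhs => rw [h_ind]
  exact integral_indicator_one (hX (measurableSet_singleton 1))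

variable [IsProbabilityMeasure μ]

lemma hasSubgaussianMGF_sub_half_of_zero_or_one {X : Ω → ℝ} (hX : Measurable X)
    (h01 : ∀ ω, X ω = 0 ∨ X ω = 1) (hhalf : μ {ω | X ω = 1} = 1 / 2) :
    HasSubgaussianMGF (fun ω => X ω - 1 / 2) (1 / 4) μ := by
  have h_mean : μ[X] = 1 / 2 := by
    rw [integral_eq_measureReal_of_zero_or_one hX h01, measureReal_def, hhalf]
    simp
  have h_Icc : ∀ ω, X ω ∈ Set.Icc (0 : ℝ) 1 := fun ω => by
    rcases h01 ω with h | h <;> simp [h]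
  have := hasSubgaussianMGF_of_mem_Icc hX.aemeasurable (ae_of_all μ h_Icc)
  rw [h_mean] at this
  convert this using 1
  norm_num

lemma measureReal_le_sum_Ioc_sub_half_le {U : ℕ → Ω → ℝ} {M p k : ℕ}
    (hU : ∀ j, Measurable (U j))
    (h01 : ∀ j, M < j → j ≤ p → ∀ ω, U j ω = 0 ∨ U j ω = 1)
    (hhalf : ∀ j, M < j → j ≤ p → μ {ω | U j ω = 1} = 1 / 2)
    (hindep : iIndepFun (fun j : {j : ℕ // M < j ∧ j ≤ p} => U j.1) μ)
    (hkp : k ≤ p) {t : ℝ} (ht : 0 ≤ t) :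
    μ.real {ω | t ≤ ∑ i ∈ Ioc M k, (U i ω - 1 / 2)} ≤
      exp (-2 * t ^ 2 / (k - M : ℕ)) := by
  have h_indep := hindep.comp (fun _ x => x - 1 / 2) fun _ => measurable_id.sub_const _
  have h := HasSubgaussianMGF.measure_sum_ge_le_of_iIndepFun h_indep (c := fun _ => 1 / 4)
    (s := (Ioc M k).subtype fun j => M < j ∧ j ≤ p)
    (fun j _ => hasSubgaussianMGF_sub_half_of_zero_or_one (hU j) (h01 j j.2.1 j.2.2)
      (hhalf j j.2.1 j.2.2)) ht
  have h_filter : (Ioc M k).filter (fun j => M < j ∧ j ≤ p) = Ioc M k :=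
    filter_true_of_mem fun j hj => ⟨(mem_Ioc.1 hj).1, (mem_Ioc.1 hj).2.trans hkp⟩
  have h_sum : ∀ ω, ∑ j ∈ (Ioc M k).subtype (fun j => M < j ∧ j ≤ p), (U j ω - 1 / 2) =
      ∑ i ∈ Ioc M k, (U i ω - 1 / 2) := fun ω => by
    rw [sum_subtype_eq_sum_filter (fun j => U j ω - 1 / 2), h_filter]
  simp only [Function.comp_apply, h_sum, sum_const, card_subtype, h_filter, Nat.card_Ioc] at h
  convert h using 2
  push_cast
  ring

lemma measureReal_seqStepStops_le {q : ℝ} (hq : -1 < q) {U : ℕ → Ω → ℝ} {M p k : ℕ}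
    (hU : ∀ j, Measurable (U j)) (hone : ∀ j, 1 ≤ j → j ≤ M → ∀ ω, U j ω = 1)
    (h01 : ∀ j, M < j → j ≤ p → ∀ ω, U j ω = 0 ∨ U j ω = 1)
    (hhalf : ∀ j, M < j → j ≤ p → μ {ω | U j ω = 1} = 1 / 2)
    (hindep : iIndepFun (fun j : {j : ℕ // M < j ∧ j ≤ p} => U j.1) μ)
    (hMk : M < k) (hkp : k ≤ p) (hk : 2 * (1 + q) * M ≤ (1 - q) * k) :
    μ.real {ω | SeqStepStops q (fun i => U i ω) k} ≤ seqStepRate q ^ k := by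
  set ε := (1 - q) / (4 * (1 + q))
  have hεk : 0 ≤ ε * k := by
    have : 0 ≤ 1 + q := by linarith
    rw [div_mul_eq_mul_div]
    exact div_nonneg (le_trans (by positivity) hk) (by linarith)
  have hkM_pos : (0 : ℝ) < (k - M : ℕ) := by exact_mod_cast Nat.sub_pos_of_lt hMk
  have hkM_le : ((k - M : ℕ) : ℝ) ≤ k := by exact_mod_cast Nat.sub_le k M
  calc μ.real {ω | SeqStepStops q (fun i => U i ω) k}
      ≤ μ.real {ω | ε * k ≤ ∑ i ∈ Ioc M k, (U i ω - 1 / 2)} :=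
        measureReal_mono fun ω hω => le_sum_Ioc_sub_half_of_seqStepStops hq
          (fun i hi hiM => hone i hi hiM ω) hMk.le hk hω
    _ ≤ exp (-2 * (ε * k) ^ 2 / (k - M : ℕ)) :=
        measureReal_le_sum_Ioc_sub_half_le hU h01 hhalf hindep hkp hεk
    _ ≤ exp (-2 * ε ^ 2 * k) := by
        gcongr
        rw [div_le_iff₀ hkM_pos]
        nlinarith [mul_le_mul_of_nonneg_left hkM_le (mul_nonneg (sq_nonneg ε) (Nat.cast_nonneg k))]
    _ = exp (-2 * ε ^ 2) ^ k := by rw [← exp_nat_mul]; ring_nf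

lemma integral_seqStepPsi_le {U : ℕ → Ω → ℝ} (hU : ∀ j, Measurable (U j))
    (p N : ℕ) (q : ℝ) :
    ∫ ω, (seqStepPsi p q (fun i => U i ω) : ℝ) ∂μ ≤
      N + ∑ k ∈ Ioc N p, k * μ.real {ω | SeqStepStops q (fun i => U i ω) k} := by
  set A : ℕ → Set Ω := fun k => {ω | SeqStepStops q (fun i => U i ω) k}
  have hA : ∀ k, MeasurableSet (A k) := fun k => measurableSet_le (by fun_prop) (by fun_prop)
  have h_int : ∀ k, Integrable ((A k).indicator fun _ => (k : ℝ)) μ :=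
    fun k => (integrable_const _).indicator (hA k)
  have h_pt : ∀ ω, (seqStepPsi p q (fun i => U i ω) : ℝ) ≤
      N + ∑ k ∈ Ioc N p, (A k).indicator (fun _ => (k : ℝ)) ω := fun ω => by
    calc (seqStepPsi p q (fun i => U i ω) : ℝ)
        ≤ ((N + ∑ k ∈ Ioc N p,
            if SeqStepStops q (fun i => U i ω) k then k else 0 : ℕ) : ℝ) :=
          Nat.cast_le.2 (seqStepPsi_le_add_sum_ite p N q _)
      _ = _ := by push_cast [Nat.cast_ite]; simp [Set.indicator_apply, A]
  calc ∫ ω, (seqStepPsi p q (fun i => U i ω) : ℝ) ∂μ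
      ≤ ∫ ω, (N + ∑ k ∈ Ioc N p, (A k).indicator (fun _ => (k : ℝ)) ω) ∂μ :=
        integral_mono_of_nonneg (ae_of_all _ fun _ => Nat.cast_nonneg _)
          ((integrable_const _).add (integrable_finsetSum _ fun k _ => h_int k)) (ae_of_all _ h_pt)
    _ = N + ∑ k ∈ Ioc N p, k * μ.real (A k) := by
        rw [integral_add (integrable_const _) (integrable_finsetSum _ fun k _ => h_int k),
          integral_const, integral_finsetSum _ fun k _ => h_int k]
        simp [integral_indicator_const _ (hA _), mul_comm]

lemma integral_seqStepPsi_le_mul_add_tsum {q : ℝ} (hq : -1 < q) (hq1 : q < 1) {c : ℕ}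
    (hc1 : 1 ≤ c) (hc : 2 * (1 + q) ≤ (1 - q) * c) {U : ℕ → Ω → ℝ} {M p : ℕ}
    (hU : ∀ j, Measurable (U j)) (hone : ∀ j, 1 ≤ j → j ≤ M → ∀ ω, U j ω = 1)
    (h01 : ∀ j, M < j → j ≤ p → ∀ ω, U j ω = 0 ∨ U j ω = 1)
    (hhalf : ∀ j, M < j → j ≤ p → μ {ω | U j ω = 1} = 1 / 2)
    (hindep : iIndepFun (fun j : {j : ℕ // M < j ∧ j ≤ p} => U j.1) μ) :
    ∫ ω, (seqStepPsi p q (fun i => U i ω) : ℝ) ∂μ ≤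
      c * M + ∑' k : ℕ, k * seqStepRate q ^ k := by
  have h_summable : Summable fun k : ℕ => (k : ℝ) * seqStepRate q ^ k := by
    simpa using summable_pow_mul_geometric_of_norm_lt_one 1
      (by rw [norm_of_nonneg (seqStepRate_pos q).le]; exact seqStepRate_lt_one hq hq1)
  have h_tail : ∀ k ∈ Ioc (c * M) p,
      μ.real {ω | SeqStepStops q (fun i => U i ω) k} ≤ seqStepRate q ^ k := by
    intro k hk
    have hk' : ((c * M : ℕ) : ℝ) ≤ k := by exact_mod_cast (mem_Ioc.1 hk).1.le
    push_cast at hk'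
    refine measureReal_seqStepStops_le hq hU hone h01 hhalf hindep
      ((Nat.le_mul_of_pos_left M hc1).trans_lt (mem_Ioc.1 hk).1) (mem_Ioc.1 hk).2 ?_
    nlinarith [mul_le_mul_of_nonneg_right hc (Nat.cast_nonneg M : (0 : ℝ) ≤ M)]
  calc ∫ ω, (seqStepPsi p q (fun i => U i ω) : ℝ) ∂μ
      ≤ (c * M : ℕ) +
          ∑ k ∈ Ioc (c * M) p, k * μ.real {ω | SeqStepStops q (fun i => U i ω) k} :=
        integral_seqStepPsi_le hU p (c * M) q
    _ ≤ (c * M : ℕ) + ∑' k : ℕ, k * seqStepRate q ^ k := by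
        gcongr
        refine (sum_le_sum fun k hk => ?_).trans
          (h_summable.sum_le_tsum _ fun k _ => nat_mul_seqStepRate_pow_nonneg q k)
        exact mul_le_mul_of_nonneg_left (h_tail k hk) (Nat.cast_nonneg k)
    _ = c * M + ∑' k : ℕ, k * seqStepRate q ^ k := by push_cast; rfl

end Probability

/-- Lemma C.1 of the paper (core probabilistic content): if `U_1, …, U_p` are
`{0,1}`-valued with `U_j = 1` deterministically for `j ≤ M` and
`(U_j)_{M < j ≤ p}` i.i.d. Bernoulli(1/2), then the SeqStep stopping index `ψ`
satisfies `E[ψ] ≤ C(q)·M` for a constant `C(q)` depending only on `q`. -/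
theorem expected_seqStepPsi_le
    (q : ℝ) (hq0 : 0 < q) (hq1 : q < 1) :
    ∃ Cq : ℝ, 0 < Cq ∧
      ∀ (p M : ℕ), 1 ≤ M → M ≤ p →
      ∀ (Ω : Type) (_ : MeasurableSpace Ω) (μ : Measure Ω),
        IsProbabilityMeasure μ →
      ∀ U : ℕ → Ω → ℝ,
        (∀ j, Measurable (U j)) →
        (∀ j, 1 ≤ j → j ≤ M → ∀ ω, U j ω = 1) →
        (∀ j, M < j → j ≤ p → ∀ ω, U j ω = 0 ∨ U j ω = 1) →
        (∀ j, M < j → j ≤ p → μ {ω | U j ω = 1} = 1 / 2) →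
        ProbabilityTheory.iIndepFun
          (fun j : {j : ℕ // M < j ∧ j ≤ p} => U j.1) μ →
        ∫ ω, (seqStepPsi p q (fun i => U i ω) : ℝ) ∂μ ≤ Cq * M := by
  set c := ⌈2 * (1 + q) / (1 - q)⌉₊
  have hc : 2 * (1 + q) ≤ (1 - q) * c := (div_le_iff₀' (by linarith)).1 (Nat.le_ceil _)
  have hc1 : 1 ≤ c := Nat.ceil_pos.2 (div_pos (by linarith) (by linarith))
  set S := ∑' k : ℕ, k * seqStepRate q ^ k
  have hS : 0 ≤ S := tsum_nonneg (nat_mul_seqStepRate_pow_nonneg q)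
  refine ⟨c + S, add_pos_of_pos_of_nonneg (by exact_mod_cast hc1) hS, ?_⟩
  intro p M hM _ Ω _ μ _ U hU hone h01 hhalf hindep
  have hM' : (1 : ℝ) ≤ M := by exact_mod_cast hM
  calc ∫ ω, (seqStepPsi p q (fun i => U i ω) : ℝ) ∂μ ≤ c * M + S :=
        integral_seqStepPsi_le_mul_add_tsum (by linarith) hq1 hc1 hc hU hone h01 hhalf hindep
    _ ≤ (c + S) * M := by nlinarith
end

section
/- Let n, p ≥ 1 and let 𝒳 = {(A, B, y) ∈ ℝ^{n×p} × ℝ^{n×p} × ℝ^n : A_j ≠ B_j for every column index j}. Let w : 𝒳 → ℝ^p satisfy w(A,B,y)_j ≠ 0 for all (A,B,y) ∈ 𝒳 and all j. Then w has the flip-sign property if and only if both of the following hold: (i) the map (A,B,y) ↦ (|w(A,B,y)_1|, …, |w(A,B,y)_p|) is swap-invariant; and (ii) for each j ∈ {1,…,p} there exists a swap-invariant function g_j : 𝒳 → ℝ^n with g_j(A,B,y) ∈ {A_j, B_j} for all inputs, such that w(A,B,y)_j > 0 if and only if g_j(A,B,y) = A_j. -/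
/-- Swap the columns of `A` and `B` indexed by `J` (this returns the first
component of the swapped pair; the second component is `swapCols J B A`).
A feature/knockoff pair `(A, B)` is encoded as two maps `Fin p → Fin n → ℝ`
sending each column index to the corresponding column vector. -/
def swapCols {n p : ℕ} (J : Finset (Fin p)) (A B : Fin p → Fin n → ℝ) :
    Fin p → Fin n → ℝ :=
  fun j => if j ∈ J then B j else A j

/-- The flip-sign property of a knockoff feature statistic
`w : (A, B, y) ↦ (W_1, …, W_p)`, required only on the domain
`𝒳 = {(A,B,y) : A_j ≠ B_j for all j}`: swapping the columns in `J` negates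
exactly the coordinates of `w` indexed by `J`. -/
def FlipSign (n p : ℕ)
    (w : (Fin p → Fin n → ℝ) → (Fin p → Fin n → ℝ) → (Fin n → ℝ) → Fin p → ℝ) :
    Prop :=
  ∀ (A B : Fin p → Fin n → ℝ) (y : Fin n → ℝ), (∀ j, A j ≠ B j) →
    ∀ (J : Finset (Fin p)) (j : Fin p),
      w (swapCols J A B) (swapCols J B A) y j
        = if j ∈ J then -(w A B y j) else w A B y j

lemma swap_ne {n p : ℕ} (J : Finset (Fin p)) (A B : Fin p → Fin n → ℝ)
    (hne : ∀ j, A j ≠ B j) : ∀ j, swapCols J A B j ≠ swapCols J B A j := by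
  intro j
  unfold swapCols
  by_cases h : j ∈ J <;> simp [h]
  · exact (hne j).symm
  · exact hne j

lemma eq_of_abs_pos (a b : ℝ) (ha : a ≠ 0) (hb : b ≠ 0) (habs : |a| = |b|)
    (hiff : 0 < a ↔ 0 < b) : a = b := by
  rcases lt_or_gt_of_ne ha with h | h
  · have hb' : ¬ 0 < b := fun hh => absurd (hiff.mpr hh) (not_lt.mpr h.le)
    have hbneg : b < 0 := lt_of_le_of_ne (not_lt.mp hb') hb
    rw [abs_of_neg h, abs_of_neg hbneg] at habs; linarith
  · have hb' : 0 < b := hiff.mp h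
    rw [abs_of_pos h, abs_of_pos hb'] at habs; exact habs

/-- Proposition 1 of the paper (deterministic content): a nowhere-zero
statistic `w` on `𝒳` has the flip-sign property if and only if (i) its
absolute values are swap-invariant (a function of the masked data), and
(ii) for each `j` there is a swap-invariant distinguishing function
`g_j ∈ {A_j, B_j}` with `w_j > 0` iff `g_j = A_j`. -/
theorem flipSign_iff_masked_data_characterization
    (n p : ℕ) (hn : 1 ≤ n) (hp : 1 ≤ p)
    (w : (Fin p → Fin n → ℝ) → (Fin p → Fin n → ℝ) → (Fin n → ℝ) → Fin p → ℝ)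
    (hnz : ∀ (A B : Fin p → Fin n → ℝ) (y : Fin n → ℝ),
      (∀ j, A j ≠ B j) → ∀ j, w A B y j ≠ 0) :
    FlipSign n p w ↔
      ((∀ (A B : Fin p → Fin n → ℝ) (y : Fin n → ℝ), (∀ j, A j ≠ B j) →
          ∀ (J : Finset (Fin p)) (j : Fin p),
            |w (swapCols J A B) (swapCols J B A) y j| = |w A B y j|) ∧
        (∀ j : Fin p,
          ∃ g : (Fin p → Fin n → ℝ) → (Fin p → Fin n → ℝ) → (Fin n → ℝ) →
              (Fin n → ℝ),
            (∀ (A B : Fin p → Fin n → ℝ) (y : Fin n → ℝ),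
              (∀ j', A j' ≠ B j') → ∀ J : Finset (Fin p),
                g (swapCols J A B) (swapCols J B A) y = g A B y) ∧
            (∀ (A B : Fin p → Fin n → ℝ) (y : Fin n → ℝ),
              (∀ j', A j' ≠ B j') → g A B y = A j ∨ g A B y = B j) ∧
            (∀ (A B : Fin p → Fin n → ℝ) (y : Fin n → ℝ),
              (∀ j', A j' ≠ B j') → (0 < w A B y j ↔ g A B y = A j)))) := by
  constructor
  · intro hfs
    constructor
    · intro A B y hne J j
      rw [hfs A B y hne J j]
      by_cases h : j ∈ J <;> simp [h]
    · intro j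
      refine ⟨fun A B y => if 0 < w A B y j then A j else B j, ?_, ?_, ?_⟩
      · intro A B y hne J
        simp only []
        rw [hfs A B y hne J j]
        by_cases hJ : j ∈ J
        · simp only [hJ, if_true]
          rcases lt_or_gt_of_ne (hnz A B y hne j) with h | h
          · simp [swapCols, hJ, not_lt.mpr h.le, h, neg_pos.mpr h]
          · simp [swapCols, hJ, h, not_lt.mpr (neg_nonpos.mpr h.le)]
        · simp only [hJ, if_false]
          by_cases h : 0 < w A B y j <;> simp [swapCols, hJ, h]
      · intro A B y hne
        by_cases h : 0 < w A B y j <;> simp [h]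
      · intro A B y hne
        by_cases h : 0 < w A B y j <;> simp [h]
        intro hAB
        exact absurd hAB.symm (hne j)
  · rintro ⟨habs, hg⟩ A B y hne J j
    obtain ⟨g, ginv, gmem, giff⟩ := hg j
    have hne' := swap_ne J A B hne
    have hw' := hnz _ _ y hne' j
    have hw := hnz A B y hne j
    have habs' := habs A B y hne J j
    have hpos' := giff _ _ y hne'
    rw [ginv A B y hne J] at hpos'
    have hpos := giff A B y hne
    by_cases hJ : j ∈ J
    · simp only [hJ, if_true]
      have hcol : swapCols J A B j = B j := by simp [swapCols, hJ]
      rw [hcol] at hpos'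
      have : (0 < w (swapCols J A B) (swapCols J B A) y j) ↔ 0 < -(w A B y j) := by
        rw [hpos', neg_pos]
        constructor
        · intro hB
          rcases lt_or_gt_of_ne hw with h2 | h2
          · exact h2
          · exact absurd ((hpos.mp h2).symm.trans hB) (hne j)
        · intro h2
          rcases gmem A B y hne with h | h
          · exact absurd (hpos.mpr h) (not_lt.mpr h2.le)
          · exact h
      refine eq_of_abs_pos _ _ hw' (neg_ne_zero.mpr hw) (by rw [habs', abs_neg]) this
    · simp only [hJ, if_false]
      have hcol : swapCols J A B j = A j := by simp [swapCols, hJ]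
      rw [hcol] at hpos'
      exact eq_of_abs_pos _ _ hw' hw habs' (hpos'.trans hpos.symm)
end
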